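/- arXiv:1311.4643 — 2 statements merged into one kernel-verified Lean document; each statement's English description precedes it below -/
import Mathlib

section
/- Let A be a nonzero m×n real matrix with ‖A‖₁² ≥ 50·m·‖A‖₂² and m ≥ 50. Then for every sampling distribution p on the entries of A, |ε₂(p)/ε₃(p) − 1| ≤ 1/50. -/
/-!
The spectral norm `L = ‖A‖₂` controls both gaps. The diagonal matrices `D_r`, `D_c` have norms
equal to the maximal row and column sums of `A²/p`, whose maximum is `σ̃²`; the triangle
inequality and `‖A Aᵀ‖₂ = ‖Aᵀ A‖₂ = L²` give `|σ² - σ̃²| ≤ L²`. Likewise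
`‖B^(i,j)‖₂ = |A i j| / p i j` gives `|R - R̃| ≤ L`.

Both `σ̃` and `R̃` are large compared with `L`. By Cauchy–Schwarz, `‖A‖₁² ≤ ∑ A²/p ≤ m σ̃²`,
and `‖A‖₁ ≤ R̃` since `p` sums to `1`. With `‖A‖₁² ≥ 50 m L²` and `m ≥ 50` this gives
`σ̃² ≥ 50 L²` and `R̃ ≥ 50 L`. So `σ` and `R` are within relative error `1/50` of `σ̃` and `R̃`,
and therefore the positive combination `ε₂` is within relative error `1/50` of `ε₃`.
-/

open Matrix

/-- The spectral norm (ℓ2→ℓ2 operator norm) of a rectangular real matrix. -/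
noncomputable def specNorm {m n : ℕ} (A : Matrix (Fin m) (Fin n) ℝ) : ℝ :=
  ‖(Matrix.toEuclideanLin A).toContinuousLinearMap‖

/-- `σ̃(p)²`: the maximum over rows and columns of `∑ (A i j)² / p i j`. -/
noncomputable def sigmaTildeSq {m n : ℕ} (A : Matrix (Fin m) (Fin n) ℝ)
    (p : Fin m → Fin n → ℝ) : ℝ :=
  max (⨆ i, ∑ j, A i j ^ 2 / p i j) (⨆ j, ∑ i, A i j ^ 2 / p i j)

/-- `σ(p)² = max{ ‖D_r(p) − A Aᵀ‖₂, ‖D_c(p) − Aᵀ A‖₂ }`. -/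
noncomputable def sigmaSq {m n : ℕ} (A : Matrix (Fin m) (Fin n) ℝ)
    (p : Fin m → Fin n → ℝ) : ℝ :=
  max (specNorm (Matrix.diagonal (fun i => ∑ j, A i j ^ 2 / p i j) - A * Aᵀ))
      (specNorm (Matrix.diagonal (fun j => ∑ i, A i j ^ 2 / p i j) - Aᵀ * A))

/-- `R̃(p) = max_{i,j} |A i j| / p i j`. -/
noncomputable def RTilde {m n : ℕ} (A : Matrix (Fin m) (Fin n) ℝ)
    (p : Fin m → Fin n → ℝ) : ℝ :=
  ⨆ i, ⨆ j, |A i j| / p i j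

/-- `R(p)`: the maximum over pairs `(i,j)` with `p i j > 0` of `‖A − B^(i,j)‖₂`. -/
noncomputable def Rp {m n : ℕ} (A : Matrix (Fin m) (Fin n) ℝ)
    (p : Fin m → Fin n → ℝ) : ℝ :=
  sSup {x : ℝ | ∃ i j, 0 < p i j ∧
    x = specNorm (A - Matrix.single i j (A i j / p i j))}

/-- `α = √(log((m+n)/δ)/s)`. -/
noncomputable def alphaC (m n s : ℕ) (δ : ℝ) : ℝ :=
  Real.sqrt (Real.log ((m + n : ℝ) / δ) / s)

/-- `β = log((m+n)/δ)/(3s)`. -/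
noncomputable def betaC (m n s : ℕ) (δ : ℝ) : ℝ :=
  Real.log ((m + n : ℝ) / δ) / (3 * s)

namespace Matrix

open scoped Matrix.Norms.L2Operator

variable {m n : Type*} [Fintype m] [Fintype n]

lemma l2_opNorm_mul_conjTranspose_self {𝕜 : Type*} [RCLike 𝕜] [DecidableEq m] [DecidableEq n]
    (A : Matrix m n 𝕜) : ‖A * Aᴴ‖ = ‖A‖ * ‖A‖ := by
  simpa [l2_opNorm_conjTranspose] using l2_opNorm_conjTranspose_mul_self Aᴴ

lemma l2_opNorm_single {𝕜 : Type*} [RCLike 𝕜] [DecidableEq m] [DecidableEq n]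
    (i : m) (j : n) (c : 𝕜) : ‖single i j c‖ = ‖c‖ := by
  have h : ‖single i j c‖ * ‖single i j c‖ = ‖c‖ * ‖c‖ := by
    rw [← l2_opNorm_conjTranspose_mul_self, conjTranspose_single, single_mul_single_same,
      ← diagonal_single, l2_opNorm_diagonal, Pi.norm_single, RCLike.star_def, RCLike.conj_mul,
      ← RCLike.ofReal_pow, RCLike.norm_ofReal, abs_of_nonneg (by positivity), sq]
  exact (mul_self_inj (norm_nonneg _) (norm_nonneg _)).1 h

lemma l2_opNorm_diagonal_of_nonneg [DecidableEq n] {d : n → ℝ} (hd : 0 ≤ d) :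
    ‖diagonal d‖ = ⨆ i, d i := by
  rw [l2_opNorm_diagonal]
  refine le_antisymm ((pi_norm_le_iff_of_nonneg (Real.iSup_nonneg hd)).2 fun i => ?_)
    (Real.iSup_le (fun i => (le_abs_self _).trans (norm_le_pi_norm d i)) (norm_nonneg _))
  rw [Real.norm_of_nonneg (hd i)]
  exact le_ciSup (Finite.bddAbove_range d) i

end Matrix

lemma sq_sum_abs_le_sum_mul_sum_sq_div {ι : Type*} (s : Finset ι) {a w : ι → ℝ}
    (hw : ∀ i ∈ s, 0 ≤ w i) (hpos : ∀ i ∈ s, a i ≠ 0 → 0 < w i) :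
    (∑ i ∈ s, |a i|) ^ 2 ≤ (∑ i ∈ s, w i) * ∑ i ∈ s, a i ^ 2 / w i := by
  refine Finset.sum_sq_le_sum_mul_sum_of_sq_le_mul s hw
    (fun i hi => div_nonneg (sq_nonneg _) (hw i hi)) fun i hi => ?_
  rcases eq_or_ne (a i) 0 with h | h
  · simp [h]
  · rw [sq_abs, mul_div_cancel₀ _ (hpos i hi h).ne']

section SpectralNorm

open scoped Matrix.Norms.L2Operator

variable {m n : ℕ}

lemma specNorm_eq_norm (A : Matrix (Fin m) (Fin n) ℝ) : specNorm A = ‖A‖ := rfl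

lemma specNorm_nonneg (A : Matrix (Fin m) (Fin n) ℝ) : 0 ≤ specNorm A := norm_nonneg A

lemma specNorm_pos {A : Matrix (Fin m) (Fin n) ℝ} (hA : A ≠ 0) : 0 < specNorm A := by
  rw [specNorm_eq_norm]
  exact norm_pos_iff.2 hA

lemma abs_specNorm_sub_sub_specNorm_le (B C : Matrix (Fin m) (Fin n) ℝ) :
    |specNorm (B - C) - specNorm B| ≤ specNorm C := by
  simpa [specNorm_eq_norm] using abs_norm_sub_norm_le (B - C) B

lemma specNorm_diagonal_of_nonneg {d : Fin n → ℝ} (hd : 0 ≤ d) :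
    specNorm (Matrix.diagonal d) = ⨆ i, d i :=
  Matrix.l2_opNorm_diagonal_of_nonneg hd

lemma specNorm_mul_transpose_self (A : Matrix (Fin m) (Fin n) ℝ) :
    specNorm (A * Aᵀ) = specNorm A ^ 2 := by
  simpa [specNorm_eq_norm, sq, ← conjTranspose_eq_transpose_of_trivial] using
    Matrix.l2_opNorm_mul_conjTranspose_self A

lemma specNorm_transpose_mul_self (A : Matrix (Fin m) (Fin n) ℝ) :
    specNorm (Aᵀ * A) = specNorm A ^ 2 := by
  simpa [specNorm_eq_norm, sq, ← conjTranspose_eq_transpose_of_trivial] using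
    Matrix.l2_opNorm_conjTranspose_mul_self A

lemma specNorm_single (i : Fin m) (j : Fin n) (c : ℝ) :
    specNorm (Matrix.single i j c) = |c| :=
  Matrix.l2_opNorm_single i j c

end SpectralNorm

lemma abs_sqrt_sub_sqrt_le {x y ε : ℝ} (hx : 0 ≤ x) (hy : 0 ≤ y) (hxy : |x - y| ≤ ε * y) :
    |√x - √y| ≤ ε * √y := by
  rcases hy.eq_or_lt with rfl | hy
  · simp_all
  have hsum : 0 < √x + √y := by positivity
  have hdiff : (√x - √y) * (√x + √y) = x - y := by
    linear_combination Real.sq_sqrt hx - Real.sq_sqrt hy.le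
  calc |√x - √y| = |x - y| / (√x + √y) := by
        rw [← hdiff, abs_mul, abs_of_pos hsum, mul_div_cancel_right₀ _ hsum.ne']
    _ ≤ ε * y / (√x + √y) := by gcongr
    _ ≤ ε * y / √y := div_le_div_of_nonneg_left ((abs_nonneg _).trans hxy) (by positivity)
        (le_add_of_nonneg_left (Real.sqrt_nonneg x))
    _ = ε * √y := by rw [mul_div_assoc, Real.div_sqrt]

lemma abs_add_div_add_sub_one_le {a b u v r t ε : ℝ} (ha : 0 ≤ a) (hb : 0 ≤ b)
    (hpos : 0 < a * u + b * t) (hv : |v - u| ≤ ε * u) (hr : |r - t| ≤ ε * t) :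
    |(a * v + b * r) / (a * u + b * t) - 1| ≤ ε := by
  rw [div_sub_one hpos.ne', abs_div, abs_of_pos hpos, div_le_iff₀ hpos]
  calc |a * v + b * r - (a * u + b * t)| = |a * (v - u) + b * (r - t)| := by ring_nf
    _ ≤ a * |v - u| + b * |r - t| := by
        simpa only [abs_mul, abs_of_nonneg ha, abs_of_nonneg hb] using
          abs_add_le (a * (v - u)) (b * (r - t))
    _ ≤ a * (ε * u) + b * (ε * t) := by gcongr
    _ = ε * (a * u + b * t) := by ring

lemma betaC_pos {m n s : ℕ} {δ : ℝ} (hs : 0 < s) (hδ : 0 < δ) (hδmn : δ < m + n) :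
    0 < betaC m n s δ :=
  div_pos (Real.log_pos ((one_lt_div hδ).2 hδmn)) (by positivity)

section Sampling

variable {m n : ℕ} (A : Matrix (Fin m) (Fin n) ℝ) (p : Fin m → Fin n → ℝ)

lemma div_le_RTilde (i : Fin m) (j : Fin n) : |A i j| / p i j ≤ RTilde A p :=
  (le_ciSup (Finite.bddAbove_range fun j => |A i j| / p i j) j).trans
    (le_ciSup (Finite.bddAbove_range fun i => ⨆ j, |A i j| / p i j) i)

lemma sum_abs_le_RTilde (hp0 : ∀ i j, 0 ≤ p i j) (hpsum : ∑ i, ∑ j, p i j = 1)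
    (hppos : ∀ i j, A i j ≠ 0 → 0 < p i j) : ∑ i, ∑ j, |A i j| ≤ RTilde A p := by
  have hentry : ∀ i j, |A i j| ≤ p i j * RTilde A p := fun i j => by
    rcases (hp0 i j).eq_or_lt with hp | hp
    · have : A i j = 0 := not_not.1 fun h => (hppos i j h).ne hp
      simp [this, ← hp]
    · exact (div_le_iff₀' hp).1 (div_le_RTilde A p i j)
  calc ∑ i, ∑ j, |A i j| ≤ ∑ i, ∑ j, p i j * RTilde A p := by
        gcongr with i _ j _
        exact hentry i j
    _ = RTilde A p := by simp only [← Finset.sum_mul, hpsum, one_mul]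

lemma sq_sum_abs_le_mul_sigmaTildeSq (hp0 : ∀ i j, 0 ≤ p i j) (hpsum : ∑ i, ∑ j, p i j = 1)
    (hppos : ∀ i j, A i j ≠ 0 → 0 < p i j) :
    (∑ i, ∑ j, |A i j|) ^ 2 ≤ m * sigmaTildeSq A p := by
  have hcs := sq_sum_abs_le_sum_mul_sum_sq_div (a := fun z : Fin m × Fin n => A z.1 z.2)
    (w := fun z => p z.1 z.2) Finset.univ (fun z _ => hp0 z.1 z.2) fun z _ => hppos z.1 z.2
  simp only [Fintype.sum_prod_type, hpsum, one_mul] at hcs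
  calc (∑ i, ∑ j, |A i j|) ^ 2 ≤ ∑ i, ∑ j, A i j ^ 2 / p i j := hcs
    _ ≤ ∑ _i : Fin m, sigmaTildeSq A p := by
        gcongr with i
        exact (le_ciSup (Finite.bddAbove_range (fun i => ∑ j, A i j ^ 2 / p i j)) i).trans
          (le_max_left _ _)
    _ = m * sigmaTildeSq A p := by simp

lemma sigmaSq_nonneg : 0 ≤ sigmaSq A p :=
  le_max_of_le_left (specNorm_nonneg _)

lemma abs_sigmaSq_sub_sigmaTildeSq_le (hp0 : ∀ i j, 0 ≤ p i j) :
    |sigmaSq A p - sigmaTildeSq A p| ≤ specNorm A ^ 2 := by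
  have hrow : 0 ≤ fun i => ∑ j, A i j ^ 2 / p i j := fun i =>
    Finset.sum_nonneg fun j _ => div_nonneg (sq_nonneg _) (hp0 i j)
  have hcol : 0 ≤ fun j => ∑ i, A i j ^ 2 / p i j := fun j =>
    Finset.sum_nonneg fun i _ => div_nonneg (sq_nonneg _) (hp0 i j)
  rw [sigmaSq, sigmaTildeSq, ← specNorm_diagonal_of_nonneg hrow,
    ← specNorm_diagonal_of_nonneg hcol]
  refine (abs_max_sub_max_le_max _ _ _ _).trans (max_le ?_ ?_)
  · exact (abs_specNorm_sub_sub_specNorm_le _ _).trans_eq (specNorm_mul_transpose_self A)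
  · exact (abs_specNorm_sub_sub_specNorm_le _ _).trans_eq (specNorm_transpose_mul_self A)

lemma abs_Rp_sub_RTilde_le (hne : ∃ i j, 0 < p i j) :
    |Rp A p - RTilde A p| ≤ specNorm A := by
  set S := {x : ℝ | ∃ i j, 0 < p i j ∧ x = specNorm (A - Matrix.single i j (A i j / p i j))}
  have hRp : Rp A p = sSup S := rfl
  have hS : BddAbove S := by
    refine (Finite.bddAbove_range fun z : Fin m × Fin n =>
      specNorm (A - Matrix.single z.1 z.2 (A z.1 z.2 / p z.1 z.2))).mono ?_
    rintro _ ⟨i, j, -, rfl⟩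
    exact ⟨(i, j), rfl⟩
  have hsingle : ∀ i j, 0 < p i j →
      specNorm (Matrix.single i j (A i j / p i j)) = |A i j| / p i j := fun i j hp => by
    rw [specNorm_single, abs_div, abs_of_pos hp]
  rw [abs_sub_le_iff, sub_le_iff_le_add, sub_le_iff_le_add, hRp]
  constructor
  · obtain ⟨i, j, hp⟩ := hne
    have hSne : S.Nonempty := ⟨_, i, j, hp, rfl⟩
    refine csSup_le hSne ?_
    rintro _ ⟨i, j, hp, rfl⟩
    have := (abs_le.1
      (abs_specNorm_sub_sub_specNorm_le A (Matrix.single i j (A i j / p i j)))).2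
    linarith [hsingle i j hp, div_le_RTilde A p i j]
  · have hbound : 0 ≤ specNorm A + sSup S := add_nonneg (specNorm_nonneg A)
      (Real.sSup_nonneg fun _ ⟨_, _, _, hx⟩ => hx ▸ specNorm_nonneg _)
    refine Real.iSup_le (fun i => Real.iSup_le (fun j => ?_) hbound) hbound
    by_cases hp : 0 < p i j
    · have hmem : specNorm (A - Matrix.single i j (A i j / p i j)) ≤ sSup S :=
        le_csSup hS ⟨i, j, hp, rfl⟩
      have := (abs_le.1 (abs_specNorm_sub_sub_specNorm_le A
        (A - Matrix.single i j (A i j / p i j)))).2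
      rw [sub_sub_cancel, hsingle i j hp] at this
      linarith
    · exact (div_nonpos_of_nonneg_of_nonpos (abs_nonneg _) (not_lt.1 hp)).trans hbound

end Sampling

theorem stmt5_general (m n : ℕ) (hm : 50 ≤ m)
    (A : Matrix (Fin m) (Fin n) ℝ) (hA : A ≠ 0)
    (hnorm : 50 * m * specNorm A ^ 2 ≤ (∑ i, ∑ j, |A i j|) ^ 2)
    (s : ℕ) (hs : 1 ≤ s) (δ : ℝ) (hδ : δ ∈ Set.Ioo (0 : ℝ) 1)
    (p : Fin m → Fin n → ℝ)
    (hp0 : ∀ i j, 0 ≤ p i j) (hpsum : ∑ i, ∑ j, p i j = 1)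
    (hppos : ∀ i j, A i j ≠ 0 → 0 < p i j) :
    |(alphaC m n s δ * Real.sqrt (sigmaSq A p) + betaC m n s δ * Rp A p) /
        (alphaC m n s δ * Real.sqrt (sigmaTildeSq A p) + betaC m n s δ * RTilde A p) - 1|
      ≤ 1 / 50 := by
  set L := specNorm A
  have hL : 0 < L := specNorm_pos hA
  have hm' : (50 : ℝ) ≤ m := by exact_mod_cast hm
  have hℓ1 : 50 * L ≤ ∑ i, ∑ j, |A i j| :=
    abs_le_of_sq_le_sq' (by nlinarith) (by positivity) |>.2
  have hσt : 50 * L ^ 2 ≤ sigmaTildeSq A p := by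
    have := hnorm.trans (sq_sum_abs_le_mul_sigmaTildeSq A p hp0 hpsum hppos)
    rw [mul_assoc, mul_left_comm] at this
    exact le_of_mul_le_mul_left this (by linarith)
  have hRt : 50 * L ≤ RTilde A p := hℓ1.trans (sum_abs_le_RTilde A p hp0 hpsum hppos)
  have hσ : |√(sigmaSq A p) - √(sigmaTildeSq A p)| ≤ 1 / 50 * √(sigmaTildeSq A p) :=
    abs_sqrt_sub_sqrt_le (sigmaSq_nonneg A p)
      ((by positivity : (0 : ℝ) ≤ 50 * L ^ 2).trans hσt)
      ((abs_sigmaSq_sub_sigmaTildeSq_le A p hp0).trans (by linarith))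
  obtain ⟨i, j, hij⟩ : ∃ i j, A i j ≠ 0 := by simpa [← Matrix.ext_iff] using hA
  have hR : |Rp A p - RTilde A p| ≤ 1 / 50 * RTilde A p :=
    (abs_Rp_sub_RTilde_le A p ⟨i, j, hppos i j hij⟩).trans (by linarith)
  have hβ : 0 < betaC m n s δ := betaC_pos hs hδ.1 (by
    have : (1 : ℝ) ≤ m + n := by norm_cast; omega
    linarith [hδ.2])
  exact abs_add_div_add_sub_one_le (Real.sqrt_nonneg _) hβ.le
    (add_pos_of_nonneg_of_pos (mul_nonneg (Real.sqrt_nonneg _) (Real.sqrt_nonneg _))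
      (mul_pos hβ (by linarith))) hσ hR

/-- If `A` is nonzero with `‖A‖₁² ≥ 50·m·‖A‖₂²` and `m ≥ 50`, then for every sampling
distribution `p` on the entries of `A`, `|ε₂(p)/ε₃(p) − 1| ≤ 1/50`, where
`ε₂(p) = α·σ(p) + β·R(p)` and `ε₃(p) = α·σ̃(p) + β·R̃(p)`. -/
theorem stmt5 (m n : ℕ) (hm : 50 ≤ m) (hn : 0 < n)
    (A : Matrix (Fin m) (Fin n) ℝ) (hA : A ≠ 0)
    (hnorm : 50 * m * specNorm A ^ 2 ≤ (∑ i, ∑ j, |A i j|) ^ 2)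
    (s : ℕ) (hs : 1 ≤ s) (δ : ℝ) (hδ : δ ∈ Set.Ioo (0 : ℝ) 1)
    (p : Fin m → Fin n → ℝ)
    (hp0 : ∀ i j, 0 ≤ p i j) (hpsum : ∑ i, ∑ j, p i j = 1)
    (hppos : ∀ i j, A i j ≠ 0 → 0 < p i j) :
    |(alphaC m n s δ * Real.sqrt (sigmaSq A p) + betaC m n s δ * Rp A p) /
        (alphaC m n s δ * Real.sqrt (sigmaTildeSq A p) + betaC m n s δ * RTilde A p) - 1|
      ≤ 1 / 50 :=
  stmt5_general m n hm A hA hnorm s hs δ hδ p hp0 hpsum hppos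
end

section
/- Let A be an m×n real matrix all of whose rows are nonzero, let z_i = ‖A_(i)‖₁, and let ζ₁ > 0 satisfy ∑_{i=1}^m ρ_i(ζ₁) = 1. Then ζ₁ ≤ 2β·‖A‖₁ + α·√(∑_{i=1}^m ‖A_(i)‖₁²). -/
/-!
The base `r_i` of the square `ρ_i(ζ₁) = r_i²` is a root of `ζ₁ r² = α z_i r + β z_i`.
Summing over `i` and using `∑ r_i² = 1` gives `ζ₁ = α ∑ z_i r_i + β ∑ z_i`, and Cauchy–Schwarz bounds
`∑ z_i r_i ≤ √(∑ z_i²) · √(∑ r_i²) = √(∑ z_i²)`.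
-/

open Matrix

/-- `ρ_i(ζ) = ( α z_i/(2ζ) + √( (α z_i/(2ζ))² + β z_i/ζ ) )²`. -/
noncomputable def rhoFun (α β z ζ : ℝ) : ℝ :=
  (α * z / (2 * ζ) + Real.sqrt ((α * z / (2 * ζ)) ^ 2 + β * z / ζ)) ^ 2

open Finset

lemma betaC_nonneg {m n s : ℕ} {δ : ℝ} (hm : 0 < m) (hδ : δ ∈ Set.Ioo (0 : ℝ) 1) :
    0 ≤ betaC m n s δ := by
  obtain ⟨hδ₀, hδ₁⟩ := hδ
  have hmn : δ ≤ (m + n : ℝ) := by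
    have : (1 : ℝ) ≤ m := by exact_mod_cast hm
    linarith [(n.cast_nonneg : (0 : ℝ) ≤ n)]
  have hlog : 0 ≤ Real.log ((m + n : ℝ) / δ) :=
    Real.log_nonneg ((one_le_div hδ₀).2 hmn)
  unfold betaC
  positivity

lemma sq_add_sqrt_sq_add_eq {a b : ℝ} (h : 0 ≤ a ^ 2 + b) :
    (a + √(a ^ 2 + b)) ^ 2 = 2 * a * (a + √(a ^ 2 + b)) + b := by
  linear_combination Real.sq_sqrt h

section rhoRoot

variable {α β z ζ : ℝ}

noncomputable def rhoRoot (α β z ζ : ℝ) : ℝ :=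
  α * z / (2 * ζ) + √((α * z / (2 * ζ)) ^ 2 + β * z / ζ)

lemma mul_rhoRoot_sq (hβ : 0 ≤ β) (hz : 0 ≤ z) (hζ : 0 < ζ) :
    ζ * rhoRoot α β z ζ ^ 2 = α * z * rhoRoot α β z ζ + β * z := by
  have hquad := sq_add_sqrt_sq_add_eq (a := α * z / (2 * ζ)) (b := β * z / ζ) (by positivity)
  rw [rhoRoot, hquad]
  field_simp

end rhoRoot

theorem le_of_sum_rhoFun_eq_one {ι : Type*} [Fintype ι] {α β ζ : ℝ} {z : ι → ℝ}
    (hα : 0 ≤ α) (hβ : 0 ≤ β) (hz : ∀ i, 0 ≤ z i) (hζ : 0 < ζ)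
    (hρ : ∑ i, rhoFun α β (z i) ζ = 1) :
    ζ ≤ α * √(∑ i, z i ^ 2) + β * ∑ i, z i := by
  set r : ι → ℝ := fun i ↦ rhoRoot α β (z i) ζ
  have hr : ∑ i, r i ^ 2 = 1 := hρ
  have hζ_eq : ζ = α * ∑ i, z i * r i + β * ∑ i, z i := calc
    ζ = ∑ i, ζ * r i ^ 2 := by rw [← mul_sum, hr, mul_one]
    _ = ∑ i, (α * (z i * r i) + β * z i) := by
      refine sum_congr rfl fun i _ ↦ ?_
      rw [mul_rhoRoot_sq hβ (hz i) hζ, mul_assoc]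
    _ = α * ∑ i, z i * r i + β * ∑ i, z i := by rw [sum_add_distrib, mul_sum, mul_sum]
  have hcs : ∑ i, z i * r i ≤ √(∑ i, z i ^ 2) := by
    simpa only [hr, Real.sqrt_one, mul_one] using Real.sum_mul_le_sqrt_mul_sqrt univ z r
  rw [hζ_eq]
  gcongr

theorem stmt17_general (m n : ℕ) (hm : 0 < m)
    (A : Matrix (Fin m) (Fin n) ℝ)
    (s : ℕ) (δ : ℝ) (hδ : δ ∈ Set.Ioo (0 : ℝ) 1)
    (ζ₁ : ℝ) (hζ : 0 < ζ₁)
    (hρsum : ∑ i, rhoFun (alphaC m n s δ) (betaC m n s δ) (∑ j, |A i j|) ζ₁ = 1) :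
    ζ₁ ≤ 2 * betaC m n s δ * (∑ i, ∑ j, |A i j|) +
      alphaC m n s δ * Real.sqrt (∑ i, (∑ j, |A i j|) ^ 2) := by
  have hβ : 0 ≤ betaC m n s δ := betaC_nonneg hm hδ
  have hz : ∀ i, 0 ≤ ∑ j, |A i j| := fun i ↦ sum_nonneg fun j _ ↦ abs_nonneg (A i j)
  have hbound := le_of_sum_rhoFun_eq_one (α := alphaC m n s δ) (Real.sqrt_nonneg _) hβ hz hζ hρsum
  have hA : 0 ≤ betaC m n s δ * ∑ i, ∑ j, |A i j| := mul_nonneg hβ (sum_nonneg fun i _ ↦ hz i)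
  linarith

/-- If every row of `A` is nonzero, `z_i = ‖A_(i)‖₁`, and `ζ₁ > 0` satisfies
`∑_i ρ_i(ζ₁) = 1`, then `ζ₁ ≤ 2β·‖A‖₁ + α·√(∑_i ‖A_(i)‖₁²)`. -/
theorem stmt17 (m n : ℕ) (hm : 0 < m) (hn : 0 < n)
    (A : Matrix (Fin m) (Fin n) ℝ) (hrows : ∀ i, ∃ j, A i j ≠ 0)
    (s : ℕ) (hs : 1 ≤ s) (δ : ℝ) (hδ : δ ∈ Set.Ioo (0 : ℝ) 1)
    (ζ₁ : ℝ) (hζ : 0 < ζ₁)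
    (hρsum : ∑ i, rhoFun (alphaC m n s δ) (betaC m n s δ) (∑ j, |A i j|) ζ₁ = 1) :
    ζ₁ ≤ 2 * betaC m n s δ * (∑ i, ∑ j, |A i j|) +
      alphaC m n s δ * Real.sqrt (∑ i, (∑ j, |A i j|) ^ 2) :=
  stmt17_general m n hm A s δ hδ ζ₁ hζ hρsum
end
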